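/- In the cube construction with κ > 1, parameter 0 < h < 1/2 satisfying 1 − h − 2h² > 0, and w = 1 − h^{1/(κ−1)}: for every j ∈ {1,…,M}, the Kullback–Leibler divergence between the n-fold products satisfies K(π_j^{⊗n} | π_1^{⊗n}) ≤ n h² / (4(1 − h − 2h²)). -/

import Mathlib

open MeasureTheory
open scoped ENNReal NNReal

/-- The joint distribution `π = (P^X, η)` on `𝒳 × {−1,1}` of a pair `(X,Y)` where `X` has law
`P^X` and `P(Y = 1 | X = x) = η(x)` (the label `1` is encoded by `true`, `−1` by `false`). -/
noncomputable def jointMeasure {𝒳 : Type*} [MeasurableSpace 𝒳]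
    (PX : Measure 𝒳) (η : 𝒳 → ℝ) : Measure (𝒳 × Bool) :=
  PX.bind fun x =>
    ENNReal.ofReal (η x) • Measure.dirac (x, true) +
      ENNReal.ofReal (1 - η x) • Measure.dirac (x, false)

/-- The Bernoulli measure on `Bool` giving mass `p` to `true` and `1 − p` to `false`
(`true` encodes `1` and `false` encodes `−1`). -/
noncomputable def bern (p : ℝ) : Measure Bool :=
  ENNReal.ofReal p • Measure.dirac true + ENNReal.ofReal (1 - p) • Measure.dirac false

/-- The marginal `P^X` of the cube construction on `𝒳 = {−1,1}^{M+1}`: the coordinates are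
independent, `P^X(x⁰ = 1) = w` and `P^X(x^j = 1) = 1/2` for `j = 1, …, M`. -/
noncomputable def cubePX (M : ℕ) (w : ℝ) : Measure (Fin (M + 1) → Bool) :=
  Measure.pi fun i => if i = 0 then bern w else bern (1 / 2)

/-- The conditional probability function `η^{(j)}` of the cube construction:
`η^{(j)}(x) = 1` if `x⁰ = 1`; `1/2 + h` if `x⁰ = −1, x^j = 1`; `1/2 + h/2` if `x⁰ = −1, x^j = −1`. -/
noncomputable def cubeEta (M : ℕ) (h : ℝ) (j : Fin M) (x : Fin (M + 1) → Bool) : ℝ :=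
  if x 0 then 1 else if x j.succ then 1 / 2 + h else 1 / 2 + h / 2

/-- The classifiers `f_k(x) = x^k`, `k = 1, …, M`, of the cube construction. -/
noncomputable def cubeF (M : ℕ) (k : Fin M) (x : Fin (M + 1) → Bool) : ℝ :=
  if x k.succ then 1 else -1

open Classical in
/-- The Kullback–Leibler divergence `K(P|Q) = ∫ log(dP/dQ) dP` if `P ≪ Q`, and `+∞` otherwise. -/
noncomputable def klDiv {Z : Type*} [MeasurableSpace Z] (P Q : Measure Z) : ℝ≥0∞ :=
  if P ≪ Q then ENNReal.ofReal (∫ z, Real.log ((P.rnDeriv Q) z).toReal ∂P) else ⊤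

/-!
The log-likelihood ratio of `n` i.i.d. samples is the sum of the single-sample ones, so the
divergence is `n` times the single-sample one. Given `x`, the label is Bernoulli, so the
single-sample divergence is the `P^X`-average of the binary divergence
`kl(η^{(j)}(x) ‖ η^{(1)}(x))`. It vanishes unless `x⁰ = −1` and `x^j ≠ x^1`, and the two
remaining cases, each of probability `(1 − w)/4`, exchange `p = 1/2 + h` and `q = 1/2 + h/2`.
Hence the single-sample divergence is `(1 − w)/4` times
`kl(p‖q) + kl(q‖p) = (p − q) log(p(1 − q)/(q(1 − p)))`, which `log t ≤ t − 1` bounds by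
`(p − q)²/(q(1 − p)) = h²/(1 − h − 2h²)`.
-/

open Real Set

lemma absolutelyContinuous_of_countable {Z : Type*} [MeasurableSpace Z] [Countable Z]
    {μ ν : Measure Z} (h : ∀ z, ν {z} = 0 → μ {z} = 0) : μ ≪ ν := by
  refine Measure.AbsolutelyContinuous.mk fun s _ hs => ?_
  rw [measure_eq_zero_iff_ae_notMem, ae_iff_of_countable] at hs ⊢
  exact fun z hμz hz => hμz (h z (by_contra fun hνz => hs z hνz hz))

lemma pi_absolutelyContinuous_pi {ι Z : Type*} [Fintype ι] [MeasurableSpace Z] [Countable Z]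
    {P Q : Measure Z} [SigmaFinite P] [SigmaFinite Q] (h : P ≪ Q) :
    Measure.pi (fun _ : ι => P) ≪ Measure.pi (fun _ : ι => Q) :=
  absolutelyContinuous_of_countable fun y hy => by
    simp only [Measure.pi_singleton, Finset.prod_eq_zero_iff] at hy ⊢
    obtain ⟨i, hi, hQ⟩ := hy
    exact ⟨i, hi, h hQ⟩

section Discrete

variable {Z : Type*} [MeasurableSpace Z] [MeasurableSingletonClass Z]

lemma rnDeriv_apply_of_countable [Countable Z] {μ ν : Measure Z} [IsFiniteMeasure μ]
    [IsFiniteMeasure ν] (h : μ ≪ ν) {z : Z} (hz : ν {z} ≠ 0) :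
    μ.rnDeriv ν z = μ {z} / ν {z} := by
  have key : μ {z} = μ.rnDeriv ν z * ν {z} := by
    rw [← lintegral_singleton, Measure.setLIntegral_rnDeriv h]
  rw [key, ENNReal.mul_div_cancel_right hz (measure_ne_top _ _)]

lemma integral_log_rnDeriv_of_countable [Countable Z] {μ ν : Measure Z} [IsFiniteMeasure μ]
    [IsFiniteMeasure ν] (h : μ ≪ ν) :
    ∫ z, log (μ.rnDeriv ν z).toReal ∂μ = ∫ z, log (μ.real {z} / ν.real {z}) ∂μ := by
  refine integral_congr_ae (ae_iff_of_countable.2 fun z hμz => ?_)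
  dsimp only
  rw [rnDeriv_apply_of_countable h fun hνz => hμz (h hνz), ENNReal.toReal_div]
  rfl

lemma measureReal_pi_singleton {ι : Type*} [Fintype ι] {α : ι → Type*}
    [∀ i, MeasurableSpace (α i)] (μ : ∀ i, Measure (α i)) [∀ i, SigmaFinite (μ i)]
    (y : ∀ i, α i) : (Measure.pi μ).real {y} = ∏ i, (μ i).real {y i} := by
  simp [measureReal_def, ENNReal.toReal_prod]

variable {ι : Type*} [Fintype ι] (P Q : Measure Z) [IsProbabilityMeasure P]
  [IsProbabilityMeasure Q]

lemma integral_log_div_pi [Finite Z] (h : P ≪ Q) :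
    ∫ y, log ((Measure.pi fun _ : ι => P).real {y} / (Measure.pi fun _ : ι => Q).real {y})
        ∂(Measure.pi fun _ : ι => P)
      = Fintype.card ι * ∫ z, log (P.real {z} / Q.real {z}) ∂P := by
  have hsum : ∀ᵐ y ∂(Measure.pi fun _ : ι => P),
      log ((Measure.pi fun _ : ι => P).real {y} / (Measure.pi fun _ : ι => Q).real {y})
        = ∑ i, log (P.real {y i} / Q.real {y i}) := by
    refine ae_iff_of_countable.2 fun y hy => ?_
    have hP : ∀ i, P.real {y i} ≠ 0 := by
      simpa [measureReal_ne_zero_iff, Finset.prod_ne_zero_iff] using hy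
    have hQ : ∀ i, Q.real {y i} ≠ 0 := fun i => (measureReal_ne_zero_iff (measure_ne_top _ _)).2
      fun hQi => (measureReal_ne_zero_iff (measure_ne_top _ _)).1 (hP i) (h hQi)
    rw [measureReal_pi_singleton, measureReal_pi_singleton, ← Finset.prod_div_distrib,
      log_prod fun i _ => div_ne_zero (hP i) (hQ i)]
  rw [integral_congr_ae hsum, integral_finsetSum _ fun i _ => .of_finite]
  have hmarg : ∀ i, ∫ y, log (P.real {y i} / Q.real {y i}) ∂(Measure.pi fun _ : ι => P)
      = ∫ z, log (P.real {z} / Q.real {z}) ∂P := fun i => by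
    have := integral_map (μ := Measure.pi fun _ : ι => P) (measurable_pi_apply i).aemeasurable
      (measurable_of_countable (fun z => log (P.real {z} / Q.real {z}))).aestronglyMeasurable
    rwa [(measurePreserving_eval (fun _ : ι => P) i).map_eq, eq_comm] at this
  simp [hmarg]

lemma klDiv_pi_eq [Finite Z] (h : P ≪ Q) :
    klDiv (Measure.pi fun _ : ι => P) (Measure.pi fun _ : ι => Q)
      = ENNReal.ofReal (Fintype.card ι * ∫ z, log (P.real {z} / Q.real {z}) ∂P) := by
  rw [klDiv, if_pos (pi_absolutelyContinuous_pi h), integral_log_rnDeriv_of_countable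
    (pi_absolutelyContinuous_pi h), integral_log_div_pi P Q h]

end Discrete

lemma bern_singleton (p : ℝ) (b : Bool) :
    bern p {b} = ENNReal.ofReal (if b then p else 1 - p) := by
  cases b <;> simp [bern]

instance (p : ℝ) : IsFiniteMeasure (bern p) := by
  constructor; simp [bern]

lemma isProbabilityMeasure_bern {p : ℝ} (hp : p ∈ Icc 0 1) : IsProbabilityMeasure (bern p) := by
  constructor
  simp [bern, ← ENNReal.ofReal_add hp.1 (sub_nonneg.2 hp.2)]

lemma integral_bern {p : ℝ} (hp : p ∈ Icc 0 1) (f : Bool → ℝ) :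
    ∫ b, f b ∂bern p = p * f true + (1 - p) * f false := by
  simp [integral_fintype .of_finite, measureReal_def, bern_singleton, hp.1, hp.2]

lemma bern_absolutelyContinuous {p q : ℝ} (hq : q ∈ Ioo 0 1) : bern p ≪ bern q :=
  absolutelyContinuous_of_countable fun b hb => by
    cases b <;> simp [bern_singleton] at hb <;> linarith [hq.1, hq.2]

noncomputable def klBern (p q : ℝ) : ℝ := p * log (p / q) + (1 - p) * log ((1 - p) / (1 - q))

lemma klBern_self (p : ℝ) : klBern p p = 0 := by
  have h (a : ℝ) : log (a / a) = 0 := by rcases eq_or_ne a 0 with rfl | ha <;> simp [*]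
  simp [klBern, h]

lemma klBern_add_klBern_le {p q : ℝ} (hq : 0 < q) (hqp : q ≤ p) (hp : p < 1) :
    klBern p q + klBern q p ≤ (p - q) ^ 2 / (q * (1 - p)) := by
  have hp0 : 0 < p := hq.trans_le hqp
  have h1p : 0 < 1 - p := sub_pos.2 hp
  have h1q : 0 < 1 - q := by linarith
  have hsymm : klBern p q + klBern q p = (p - q) * (log (p / q) + log ((1 - q) / (1 - p))) := by
    rw [klBern, klBern, log_div hp0.ne' hq.ne', log_div hq.ne' hp0.ne', log_div h1p.ne' h1q.ne',
      log_div h1q.ne' h1p.ne']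
    ring
  have hlog₁ : log (p / q) ≤ (p - q) / q := by
    have := log_le_sub_one_of_pos (div_pos hp0 hq)
    rwa [div_sub_one hq.ne'] at this
  have hlog₂ : log ((1 - q) / (1 - p)) ≤ (p - q) / (1 - p) := by
    have := log_le_sub_one_of_pos (div_pos h1q h1p)
    rwa [div_sub_one h1p.ne', sub_sub_sub_cancel_left] at this
  calc klBern p q + klBern q p ≤ (p - q) * ((p - q) / q + (p - q) / (1 - p)) := by
        rw [hsymm]; gcongr
    _ = (p - q) ^ 2 * (1 - (p - q)) / (q * (1 - p)) := by field_simp; ring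
    _ ≤ (p - q) ^ 2 / (q * (1 - p)) := by
        gcongr
        nlinarith

section JointMeasure

variable {X : Type*} [MeasurableSpace X] [Countable X] [MeasurableSingletonClass X]
  (PX : Measure X) (η η' : X → ℝ)

lemma jointMeasure_singleton (x : X) (b : Bool) :
    jointMeasure PX η {(x, b)} = bern (η x) {b} * PX {x} := by
  rw [jointMeasure, Measure.bind_apply (measurableSet_singleton _)
    (measurable_of_countable _).aemeasurable, lintegral_countable', tsum_eq_single x]
  · cases b <;> simp [bern]
  · intro x' hx'
    simp [hx']

lemma isProbabilityMeasure_jointMeasure [IsProbabilityMeasure PX] (hη : ∀ x, η x ∈ Icc 0 1) :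
    IsProbabilityMeasure (jointMeasure PX η) := by
  constructor
  rw [jointMeasure, Measure.bind_apply MeasurableSet.univ (measurable_of_countable _).aemeasurable]
  simp [← ENNReal.ofReal_add (hη _).1 (sub_nonneg.2 (hη _).2)]

lemma jointMeasure_absolutelyContinuous (h : ∀ x, bern (η x) ≪ bern (η' x)) :
    jointMeasure PX η ≪ jointMeasure PX η' :=
  absolutelyContinuous_of_countable fun ⟨x, b⟩ hz => by
    rw [jointMeasure_singleton, mul_eq_zero] at hz ⊢
    exact hz.imp_left (h x ·)

lemma measureReal_jointMeasure_singleton (hη : ∀ x, η x ∈ Icc 0 1) (x : X) (b : Bool) :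
    (jointMeasure PX η).real {(x, b)} = (if b then η x else 1 - η x) * PX.real {x} := by
  rw [measureReal_def, jointMeasure_singleton, bern_singleton, ENNReal.toReal_mul,
    ENNReal.toReal_ofReal (by split_ifs <;> linarith [(hη x).1, (hη x).2]), measureReal_def]

lemma integral_log_div_jointMeasure [Fintype X] [IsProbabilityMeasure PX]
    (hη : ∀ x, η x ∈ Icc 0 1) (hη' : ∀ x, η' x ∈ Icc 0 1) :
    ∫ z, log ((jointMeasure PX η).real {z} / (jointMeasure PX η').real {z}) ∂jointMeasure PX η
      = ∫ x, klBern (η x) (η' x) ∂PX := by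
  have := isProbabilityMeasure_jointMeasure PX η hη
  have hcancel (a b : ℝ) (x : X) : PX.real {x} ≠ 0 →
      log (a * PX.real {x} / (b * PX.real {x})) = log (a / b) := fun hx => by
    rw [mul_div_mul_right _ _ hx]
  rw [integral_fintype .of_finite, integral_fintype .of_finite, Fintype.sum_prod_type]
  refine Finset.sum_congr rfl fun x _ => ?_
  simp only [Fintype.sum_bool, measureReal_jointMeasure_singleton PX _ hη,
    measureReal_jointMeasure_singleton PX _ hη', smul_eq_mul, klBern]
  rcases eq_or_ne (PX.real {x}) 0 with hx | hx
  · simp [hx]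
  · rw [hcancel _ _ _ hx, hcancel _ _ _ hx]
    simp only [if_true, Bool.false_eq_true, if_false]
    ring

end JointMeasure

section Cube

variable {M : ℕ}

lemma isProbabilityMeasure_cubePX {w : ℝ} (hw : w ∈ Icc 0 1) :
    IsProbabilityMeasure (cubePX M w) := by
  have := isProbabilityMeasure_bern hw
  have := isProbabilityMeasure_bern (p := 1 / 2) (by norm_num)
  have (i : Fin (M + 1)) : IsProbabilityMeasure (if i = 0 then bern w else bern (1 / 2)) := by
    split_ifs <;> infer_instance
  unfold cubePX; infer_instance

lemma cubePX_map_eval_three (w : ℝ) {a b : Fin (M + 1)} (ha : a ≠ 0)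
    (hb : b ≠ 0) (hab : a ≠ b) :
    (cubePX M w).map (fun x => (x 0, x a, x b))
      = (bern w).prod ((bern (1 / 2)).prod (bern (1 / 2))) := by
  have := isProbabilityMeasure_bern (p := 1 / 2) (by norm_num)
  have (i : Fin (M + 1)) : IsFiniteMeasure (if i = 0 then bern w else bern (1 / 2)) := by
    split_ifs <;> infer_instance
  refine Measure.ext_of_singleton fun ⟨u, v, t⟩ => ?_
  have hpre : (fun x : Fin (M + 1) → Bool => (x 0, x a, x b)) ⁻¹' {(u, v, t)} =
      Set.univ.pi fun i => if i = 0 then {u} else if i = a then {v} else if i = b then {t}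
        else Set.univ := by
    ext x
    simp only [Set.mem_preimage, Set.mem_singleton_iff, Prod.mk.injEq, Set.mem_univ_pi]
    refine ⟨fun ⟨h0, ha', hb'⟩ i => ?_, fun h => ⟨by simpa using h 0, by simpa [ha] using h a,
      by simpa [hb, Ne.symm hab] using h b⟩⟩
    split_ifs with h1 h2 h3 <;> simp [*]
  rw [Measure.map_apply (measurable_of_countable _) (measurableSet_singleton _), hpre, cubePX,
    Measure.pi_pi, ← Finset.prod_subset (Finset.subset_univ {0, a, b}), Finset.prod_insert,
    Finset.prod_pair hab, ← Set.singleton_prod_singleton, Measure.prod_prod,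
    ← Set.singleton_prod_singleton, Measure.prod_prod]
  · simp [ha, hb, Ne.symm hab]
  · simp [Ne.symm ha, Ne.symm hb]
  · intro i _ hi
    simp only [Finset.mem_insert, Finset.mem_singleton, not_or] at hi
    simp only [if_neg hi.1, if_neg hi.2.1, if_neg hi.2.2]
    exact measure_univ

lemma cubeEta_mem_Icc {h : ℝ} (hh0 : 0 ≤ h) (hh : h ≤ 1 / 2) (j : Fin M)
    (x : Fin (M + 1) → Bool) : cubeEta M h j x ∈ Icc 0 1 := by
  unfold cubeEta; split_ifs <;> constructor <;> linarith

lemma bern_cubeEta_absolutelyContinuous {h : ℝ} (hh0 : 0 ≤ h) (hh : h < 1 / 2) (j k : Fin M)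
    (x : Fin (M + 1) → Bool) : bern (cubeEta M h j x) ≪ bern (cubeEta M h k x) := by
  cases hx : x 0
  · exact bern_absolutelyContinuous (by
      simp only [cubeEta, hx, Bool.false_eq_true, if_false]; split_ifs <;> constructor <;> linarith)
  · simp only [cubeEta, hx, if_true]
    exact .rfl

lemma integral_klBern_cubeEta {w h : ℝ} (hw : w ∈ Icc 0 1) {j k : Fin M} (hjk : j ≠ k) :
    ∫ x, klBern (cubeEta M h j x) (cubeEta M h k x) ∂cubePX M w
      = (1 - w) / 4 *
          (klBern (1 / 2 + h / 2) (1 / 2 + h) + klBern (1 / 2 + h) (1 / 2 + h / 2)) := by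
  have hhalf : (1 / 2 : ℝ) ∈ Icc 0 1 := by norm_num
  have := isProbabilityMeasure_bern hw
  have := isProbabilityMeasure_bern hhalf
  let F : Bool × Bool × Bool → ℝ := fun ⟨u, v, t⟩ =>
    klBern (if u then 1 else if v then 1 / 2 + h else 1 / 2 + h / 2)
      (if u then 1 else if t then 1 / 2 + h else 1 / 2 + h / 2)
  change ∫ x, F (x 0, x j.succ, x k.succ) ∂cubePX M w = _
  rw [← integral_map (φ := fun x : Fin (M + 1) → Bool => (x 0, x j.succ, x k.succ))
    (measurable_of_countable _).aemeasurable
    (measurable_of_countable _).aestronglyMeasurable, cubePX_map_eval_three w (Fin.succ_ne_zero j)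
    (Fin.succ_ne_zero k) ((Fin.succ_injective _).ne hjk), integral_prod _ .of_finite]
  simp only [integral_prod _ Integrable.of_finite, integral_bern hw, integral_bern hhalf, F]
  simp [klBern_self]
  ring

lemma integral_klBern_cubeEta_le {w h : ℝ} (hw : w ∈ Icc 0 1) (hh0 : 0 ≤ h) (hh : h < 1 / 2)
    (j k : Fin M) :
    ∫ x, klBern (cubeEta M h j x) (cubeEta M h k x) ∂cubePX M w
      ≤ h ^ 2 / (4 * (1 - h - 2 * h ^ 2)) := by
  have hden : 0 < 1 - h - 2 * h ^ 2 := by nlinarith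
  rcases eq_or_ne j k with rfl | hjk
  · simp only [klBern_self, integral_zero]
    positivity
  rw [integral_klBern_cubeEta hw hjk]
  have hJ := klBern_add_klBern_le (p := 1 / 2 + h) (q := 1 / 2 + h / 2) (by linarith) (by linarith)
    (by linarith)
  have hJ' : (1 / 2 + h - (1 / 2 + h / 2)) ^ 2 / ((1 / 2 + h / 2) * (1 - (1 / 2 + h)))
      = h ^ 2 / (1 - h - 2 * h ^ 2) := by
    rw [div_eq_div_iff (by nlinarith) hden.ne']
    ring
  have h1w : 0 ≤ 1 - w := sub_nonneg.2 hw.2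
  calc (1 - w) / 4 * (klBern (1 / 2 + h / 2) (1 / 2 + h) + klBern (1 / 2 + h) (1 / 2 + h / 2))
      ≤ (1 - w) / 4 * (h ^ 2 / (1 - h - 2 * h ^ 2)) := by gcongr; linarith
    _ ≤ 1 / 4 * (h ^ 2 / (1 - h - 2 * h ^ 2)) := by gcongr; linarith [hw.1]
    _ = h ^ 2 / (4 * (1 - h - 2 * h ^ 2)) := by rw [div_mul_eq_div_div_swap]; ring

end Cube

/-- in the cube construction with `κ > 1`, `0 < h < 1/2` such that
`1 − h − 2h² > 0`, and `w = 1 − h^{1/(κ−1)}`, the Kullback–Leibler divergence between the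
`n`-fold products satisfies `K(π_j^{⊗n} | π_1^{⊗n}) ≤ n h² / (4(1 − h − 2h²))` for every `j`. -/
theorem cube_kl_bound (M : ℕ) (hM : 2 ≤ M) (κ : ℝ) (hκ : 1 < κ)
    (h : ℝ) (hh0 : 0 < h) (hh : h < 1 / 2)
    (n : ℕ) (j : Fin M) :
    klDiv
        (Measure.pi fun _ : Fin n =>
          jointMeasure (cubePX M (1 - h ^ (1 / (κ - 1)))) (cubeEta M h j))
        (Measure.pi fun _ : Fin n =>
          jointMeasure (cubePX M (1 - h ^ (1 / (κ - 1)))) (cubeEta M h ⟨0, by omega⟩))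
      ≤ ENNReal.ofReal ((n : ℝ) * h ^ 2 / (4 * (1 - h - 2 * h ^ 2))) := by
  have hexp : 0 ≤ 1 / (κ - 1) := by have := sub_pos.2 hκ; positivity
  have hw : 1 - h ^ (1 / (κ - 1)) ∈ Icc 0 1 :=
    ⟨sub_nonneg.2 (rpow_le_one hh0.le (by linarith) hexp), sub_le_self _ (by positivity)⟩
  have := isProbabilityMeasure_cubePX (M := M) hw
  have hη := cubeEta_mem_Icc (M := M) hh0.le hh.le
  have := isProbabilityMeasure_jointMeasure (cubePX M (1 - h ^ (1 / (κ - 1)))) _ (hη j)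
  have := isProbabilityMeasure_jointMeasure (cubePX M (1 - h ^ (1 / (κ - 1)))) _ (hη ⟨0, by omega⟩)
  rw [klDiv_pi_eq _ _ (jointMeasure_absolutelyContinuous _ _ _
      (bern_cubeEta_absolutelyContinuous hh0.le hh j _)),
    integral_log_div_jointMeasure _ _ _ (hη j) (hη _), Fintype.card_fin, mul_div_assoc]
  exact ENNReal.ofReal_le_ofReal
    (mul_le_mul_of_nonneg_left (integral_klBern_cubeEta_le hw hh0.le hh _ _) n.cast_nonneg)
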